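/- Let P ∈ ℝ^{n×n} and Q ∈ ℝ^{m×m} be symmetric matrices and let B ∈ ℝ^{m×n} be arbitrary. Consider the real (n+m)×(n+m) block matrix J = [[−P, −Bᵀ], [B, −Q]]. Then every complex eigenvalue λ of J satisfies |Im(λ)| ≤ √(λ_max(BᵀB)), where λ_max(BᵀB) is the largest eigenvalue of the symmetric positive semidefinite matrix BᵀB. In particular, this bound is independent of P and Q. -/

import Mathlib

/-!
Take an eigenpair `J v = λ v` and split `v = (x, y)`. In `v* J v = λ ‖v‖²` the diagonal
blocks `-P`, `-Q` contribute real numbers, while the off-diagonal blocks contribute `y* B x` and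
`-x* Bᵀ y = -conj (y* B x)`, so `Im λ ‖v‖² = 2 Im (y* B x)`. By Cauchy–Schwarz and
`‖B x‖² = x* BᵀB x ≤ λ_max(BᵀB) ‖x‖²` this is at most
`2 √λ_max ‖x‖ ‖y‖ ≤ √λ_max (‖x‖² + ‖y‖²) = √λ_max ‖v‖²`.
-/

open Matrix WithLp

namespace Matrix

variable {𝕜 : Type*} [RCLike 𝕜] {m n : Type*} [Fintype m] [Fintype n]

theorem exists_mulVec_eq_smul_of_mem_spectrum {K : Type*} [Field K] [DecidableEq n]
    {M : Matrix n n K} {μ : K} (h : μ ∈ spectrum K M) :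
    ∃ v : n → K, v ≠ 0 ∧ M *ᵥ v = μ • v := by
  rw [← spectrum_toLin'] at h
  obtain ⟨v, hv⟩ := (Module.End.hasEigenvalue_iff_mem_spectrum.mpr h).exists_hasEigenvector
  exact ⟨v, hv.2, by simpa using hv.apply_eq_smul⟩

theorem star_dotProduct_self_eq_norm_sq (x : n → 𝕜) :
    star x ⬝ᵥ x = (‖toLp 2 x‖ : 𝕜) ^ 2 := by
  rw [dotProduct_comm, ← EuclideanSpace.inner_toLp_toLp, inner_self_eq_norm_sq_to_K]

theorem norm_star_dotProduct_le (x y : n → 𝕜) :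
    ‖star x ⬝ᵥ y‖ ≤ ‖toLp 2 x‖ * ‖toLp 2 y‖ := by
  rw [dotProduct_comm, ← EuclideanSpace.inner_toLp_toLp]
  exact norm_inner_le_norm _ _

theorem norm_toLp_sumElim_sq (x : m → 𝕜) (y : n → 𝕜) :
    ‖toLp 2 (Sum.elim x y)‖ ^ 2 = ‖toLp 2 x‖ ^ 2 + ‖toLp 2 y‖ ^ 2 := by
  simp only [EuclideanSpace.norm_sq_eq, Fintype.sum_sum_type, Sum.elim_inl, Sum.elim_inr]

theorem star_dotProduct_mulVec_eq_mul_norm_sq {M : Matrix n n 𝕜} {μ : 𝕜} {v : n → 𝕜}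
    (hv : M *ᵥ v = μ • v) : star v ⬝ᵥ (M *ᵥ v) = μ * (‖toLp 2 v‖ : 𝕜) ^ 2 := by
  rw [hv, dotProduct_smul, smul_eq_mul, star_dotProduct_self_eq_norm_sq]

theorem star_dotProduct_conjTranspose_mulVec (A : Matrix m n 𝕜) (x : m → 𝕜)
    (y : n → 𝕜) : star y ⬝ᵥ (Aᴴ *ᵥ x) = star (star x ⬝ᵥ (A *ᵥ y)) := by
  rw [← star_dotProduct, star_mulVec, dotProduct_mulVec, dotProduct_comm]

theorem im_star_dotProduct_fromBlocks_mulVec {P : Matrix n n 𝕜} {Q : Matrix m m 𝕜}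
    (hP : P.IsHermitian) (hQ : Q.IsHermitian) (B : Matrix m n 𝕜) (x : n → 𝕜)
    (y : m → 𝕜) :
    RCLike.im (star (Sum.elim x y) ⬝ᵥ (fromBlocks (-P) (-Bᴴ) B (-Q) *ᵥ Sum.elim x y)) =
      2 * RCLike.im (star y ⬝ᵥ (B *ᵥ x)) := by
  have hstar : star (Sum.elim x y) = Sum.elim (star x) (star y) := by
    ext (i | i) <;> rfl
  rw [hstar, fromBlocks_mulVec, sumElim_dotProduct_sumElim]
  simp only [Sum.elim_comp_inl, Sum.elim_comp_inr, neg_mulVec, dotProduct_add, dotProduct_neg,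
    star_dotProduct_conjTranspose_mulVec, map_add, map_neg, RCLike.star_def, RCLike.conj_im,
    hP.im_star_dotProduct_mulVec_self, hQ.im_star_dotProduct_mulVec_self]
  ring

open scoped ComplexOrder in
theorem norm_mulVec_le_sqrt_mul_of_spectrum_le [DecidableEq n] {A : Matrix m n 𝕜} {r : ℝ}
    (hr : ∀ μ ∈ spectrum ℝ (Aᴴ * A), μ ≤ r) (x : n → 𝕜) :
    ‖toLp 2 (A *ᵥ x)‖ ≤ √r * ‖toLp 2 x‖ := by
  open scoped MatrixOrder in
  have hpsd : (algebraMap ℝ (Matrix n n 𝕜) r - Aᴴ * A).PosSemidef :=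
    le_iff.mp (le_algebraMap_of_spectrum_le hr (isHermitian_conjTranspose_mul_self A))
  have hquad := hpsd.dotProduct_mulVec_nonneg x
  rw [Algebra.algebraMap_eq_smul_one, sub_mulVec, dotProduct_sub, smul_mulVec, one_mulVec,
    dotProduct_smul, ← mulVec_mulVec, star_dotProduct_conjTranspose_mulVec,
    star_dotProduct_self_eq_norm_sq, star_dotProduct_self_eq_norm_sq, RCLike.real_smul_eq_coe_mul,
    ← RCLike.ofReal_pow, ← RCLike.ofReal_pow, RCLike.star_def, RCLike.conj_ofReal,
    ← RCLike.ofReal_mul, ← RCLike.ofReal_sub, RCLike.ofReal_nonneg, sub_nonneg] at hquad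
  rw [← Real.sqrt_sq (norm_nonneg (toLp 2 (A *ᵥ x))), ← Real.sqrt_sq (norm_nonneg (toLp 2 x)),
    ← Real.sqrt_mul' _ (sq_nonneg _)]
  exact Real.sqrt_le_sqrt hquad

theorem abs_im_le_of_fromBlocks_mulVec_eq_smul {P : Matrix n n 𝕜} {Q : Matrix m m 𝕜}
    (hP : P.IsHermitian) (hQ : Q.IsHermitian) {B : Matrix m n 𝕜} {c : ℝ} (hc : 0 ≤ c)
    (hB : ∀ x, ‖toLp 2 (B *ᵥ x)‖ ≤ c * ‖toLp 2 x‖) {μ : 𝕜} {v : n ⊕ m → 𝕜}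
    (hv0 : v ≠ 0) (hv : fromBlocks (-P) (-Bᴴ) B (-Q) *ᵥ v = μ • v) :
    |RCLike.im μ| ≤ c := by
  set x := v ∘ Sum.inl
  set y := v ∘ Sum.inr
  have hxy : Sum.elim x y = v := Sum.elim_comp_inl_inr v
  have him : RCLike.im μ * ‖toLp 2 v‖ ^ 2 = 2 * RCLike.im (star y ⬝ᵥ (B *ᵥ x)) := by
    have h := congrArg RCLike.im (star_dotProduct_mulVec_eq_mul_norm_sq hv)
    rw [← hxy, im_star_dotProduct_fromBlocks_mulVec hP hQ, ← RCLike.ofReal_pow,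
      RCLike.im_mul_ofReal] at h
    rw [← hxy, h]
  have hcs : |RCLike.im (star y ⬝ᵥ (B *ᵥ x))| ≤ ‖toLp 2 y‖ * (c * ‖toLp 2 x‖) :=
    (RCLike.abs_im_le_norm _).trans <| (norm_star_dotProduct_le y _).trans <|
      mul_le_mul_of_nonneg_left (hB x) (norm_nonneg _)
  have hv_pos : 0 < ‖toLp 2 v‖ ^ 2 := by
    have : toLp 2 v ≠ 0 := by simpa using hv0
    positivity
  have hsplit := norm_toLp_sumElim_sq x y
  rw [hxy] at hsplit
  refine le_of_mul_le_mul_right ?_ hv_pos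
  calc |RCLike.im μ| * ‖toLp 2 v‖ ^ 2 = |RCLike.im μ * ‖toLp 2 v‖ ^ 2| := by
        rw [abs_mul, abs_of_pos hv_pos]
    _ = 2 * |RCLike.im (star y ⬝ᵥ (B *ᵥ x))| := by rw [him, abs_mul, abs_two]
    _ ≤ 2 * (‖toLp 2 y‖ * (c * ‖toLp 2 x‖)) := by gcongr
    _ ≤ c * (‖toLp 2 x‖ ^ 2 + ‖toLp 2 y‖ ^ 2) := by
        nlinarith [mul_nonneg hc (sq_nonneg (‖toLp 2 x‖ - ‖toLp 2 y‖))]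
    _ = c * ‖toLp 2 v‖ ^ 2 := by rw [hsplit]

end Matrix

/-- For `J = [[−P, −Bᵀ], [B, −Q]]` with `P`, `Q` symmetric and `B` arbitrary, every
complex eigenvalue `λ` of `J` satisfies `|Im λ| ≤ √(λ_max(BᵀB))`, a bound independent
of `P` and `Q`. -/
theorem gan_jacobian_imaginary_part_bound
    {n m : ℕ} (P : Matrix (Fin n) (Fin n) ℝ) (Q : Matrix (Fin m) (Fin m) ℝ)
    (B : Matrix (Fin m) (Fin n) ℝ)
    (hPsymm : P.IsSymm) (hQsymm : Q.IsSymm)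
    (J : Matrix (Fin n ⊕ Fin m) (Fin n ⊕ Fin m) ℝ)
    (hJ : J = Matrix.fromBlocks (-P) (-Bᵀ) B (-Q))
    (bmax : ℝ) (hbmax : IsGreatest (spectrum ℝ (Bᵀ * B)) bmax) :
    ∀ lam ∈ spectrum ℂ (J.map Complex.ofReal), |lam.im| ≤ Real.sqrt bmax := by
  intro lam hlam
  have hofReal_star : Function.Semiconj Complex.ofReal star star :=
    fun r => (Complex.conj_ofReal r).symm
  have hBH : (B.map Complex.ofReal)ᴴ = Bᵀ.map Complex.ofReal := by
    rw [← conjTranspose_map _ hofReal_star, conjTranspose_eq_transpose_of_trivial]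
  have hJ_map : J.map Complex.ofReal = fromBlocks (-P.map Complex.ofReal)
      (-(B.map Complex.ofReal)ᴴ) (B.map Complex.ofReal) (-Q.map Complex.ofReal) := by
    simp only [hJ, hBH, fromBlocks_map, Matrix.map_neg _ Complex.ofReal_neg]
  have hspec : spectrum ℝ ((B.map Complex.ofReal)ᴴ * B.map Complex.ofReal) ⊆
      spectrum ℝ (Bᵀ * B) := by
    -- an algebra map preserves invertibility, so it can only shrink the spectrum
    have h := AlgHom.spectrum_apply_subset Complex.ofRealAm.mapMatrix (Bᵀ * B)
    rwa [AlgHom.mapMatrix_apply, Matrix.map_mul, Complex.ofRealAm_coe, ← hBH] at h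
  obtain ⟨v, hv0, hv⟩ := exists_mulVec_eq_smul_of_mem_spectrum hlam
  rw [hJ_map] at hv
  exact abs_im_le_of_fromBlocks_mulVec_eq_smul
    ((isHermitian_iff_isSymm.mpr hPsymm).map _ hofReal_star)
    ((isHermitian_iff_isSymm.mpr hQsymm).map _ hofReal_star)
    (Real.sqrt_nonneg _)
    (norm_mulVec_le_sqrt_mul_of_spectrum_le fun μ hμ => hbmax.2 (hspec hμ)) hv0 hv
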